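/- arXiv:2105.13141 — 2 statements merged into one kernel-verified Lean document; each statement's English description precedes it below -/
import Mathlib

section
/- Let n ≥ 5 be an integer and α,β,γ ∈ ℂ, and let d be a derivation of the Leibniz algebra 𝓛(α,β,γ). Then there exist complex numbers a_1,…,a_n and b_2,…,b_n such that d(e_1) = Σ_{t=1}^{n} a_t e_t, d(e_2) = (2a_1 + α a_{n−1})e_2 + Σ_{t=3}^{n−2} a_{t−1} e_t + (a_{n−1} + β a_{n−1})e_n, d(e_i) = (i a_1 + α a_{n−1})e_i + Σ_{t=i+1}^{n−2} a_{t−i+1} e_t for 3 ≤ i ≤ n−2, d(e_{n−1}) = Σ_{t=2}^{n} b_t e_t, and d(e_n) = (b_{n−3} − α a_{n−3})e_{n−2} + (b_{n−1} + a_1 + γ a_{n−1} − α(1+β)a_{n−1})e_n, where moreover b_i = α a_i for 2 ≤ i ≤ n−4, β(b_{n−3} − α a_{n−3}) = 0, γ(b_{n−3} − α a_{n−3}) = 0, α b_{n−1} = α a_1 + α² a_{n−1}, γ b_{n−1} = γ(a_1 + γ a_{n−1} − α(1+β)a_{n−1}), and γ a_{n−1} = β a_{n−1}(γ − α(1+β)).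 -/
open scoped BigOperators

noncomputable section

/-- `stdE n i` : the `i`-th standard basis vector of `Fin n → ℂ` (1-based indexing);
zero when `i` is out of range. -/
def stdE (n : ℕ) (i : ℕ) : Fin n → ℂ := fun j => if (j : ℕ) + 1 = i then 1 else 0

/-- The bilinear bracket on `Fin n → ℂ` determined by structure constants `c`
(1-based indices). -/
def scBr (n : ℕ) (c : ℕ → ℕ → Fin n → ℂ) (x y : Fin n → ℂ) : Fin n → ℂ :=
  ∑ i : Fin n, ∑ j : Fin n, (x i * y j) • c ((i : ℕ) + 1) ((j : ℕ) + 1)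

/-- Structure constants of the Leibniz algebra `𝓛(α,β,γ)`: the only nonzero products of
basis vectors are `[e_i,e_1]=e_{i+1}` for `1 ≤ i ≤ n-3`, `[e_{n-1},e_1]=e_n+α e_2`,
`[e_1,e_{n-1}]=β e_n`, `[e_{n-1},e_{n-1}]=γ e_n`. -/
def Lc (n : ℕ) (α β γ : ℂ) (i j : ℕ) : Fin n → ℂ :=
  (if 1 ≤ i ∧ i ≤ n - 3 ∧ j = 1 then stdE n (i + 1) else 0)
  + (if i = n - 1 ∧ j = 1 then stdE n n + α • stdE n 2 else 0)
  + (if i = 1 ∧ j = n - 1 then β • stdE n n else 0)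
  + (if i = n - 1 ∧ j = n - 1 then γ • stdE n n else 0)

/-- `d` is a derivation of the bracket determined by the structure constants `c`. -/
def IsDer (n : ℕ) (c : ℕ → ℕ → Fin n → ℂ) (d : (Fin n → ℂ) →ₗ[ℂ] (Fin n → ℂ)) : Prop :=
  ∀ x y : Fin n → ℂ, d (scBr n c x y) = scBr n c (d x) y + scBr n c x (d y)

/-! The derivation `d` is determined by `a_t` and `b_t`, the coordinates of `d e_1` and
`d e_{n-1}`, because `e_1` and `e_{n-1}` generate the algebra: `e_{i+1} = [e_i, e_1]` and
`e_n = [e_{n-1}, e_1] - α e_2`. Applying the Leibniz rule to these products gives `d e_i` by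
induction on `i`, and `d e_n`. The remaining products `[e_n, e_1] = 0`, `[e_1, e_{n-1}] = β e_n`
and `[e_{n-1}, e_{n-1}] = γ e_n` then force the coordinates of `d e_n` below `n - 2` to vanish
and yield the linear relations between the `a_t` and `b_t`. Everything is compared coordinate by
coordinate, using an explicit formula for the coordinates of a bracket. -/

def stdCoord (n p : ℕ) : (Fin n → ℂ) →ₗ[ℂ] ℂ :=
  if h : 1 ≤ p ∧ p ≤ n then LinearMap.proj ⟨p - 1, by omega⟩ else 0

section Coordinates
variable {n : ℕ}

theorem stdCoord_apply {p : ℕ} (v : Fin n → ℂ) :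
    stdCoord n p v = if h : 1 ≤ p ∧ p ≤ n then v ⟨p - 1, by omega⟩ else 0 := by
  unfold stdCoord; split_ifs <;> rfl

theorem stdCoord_eq_apply {p : ℕ} (k : Fin n) (h : p = k + 1) (v : Fin n → ℂ) :
    stdCoord n p v = v k := by
  subst h; rw [stdCoord_apply, dif_pos (by omega)]; rfl

theorem eq_of_stdCoord_eq {v w : Fin n → ℂ}
    (h : ∀ p, 1 ≤ p → p ≤ n → stdCoord n p v = stdCoord n p w) : v = w := by
  funext k
  rw [← stdCoord_eq_apply k rfl v, ← stdCoord_eq_apply k rfl w]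
  exact h _ (by omega) (by omega)

theorem stdCoord_stdE (p i : ℕ) :
    stdCoord n p (stdE n i) = if p = i ∧ 1 ≤ p ∧ p ≤ n then 1 else 0 := by
  by_cases h : 1 ≤ p ∧ p ≤ n
  · rw [stdCoord_apply, dif_pos h]
    show (if p - 1 + 1 = i then (1 : ℂ) else 0) = _
    simp only [h, and_true, Nat.sub_add_cancel h.1]
  · rw [stdCoord_apply, dif_neg h, if_neg (by tauto)]

theorem stdCoord_stdE_self {i : ℕ} (h : 1 ≤ i ∧ i ≤ n) : stdCoord n i (stdE n i) = 1 := by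
  rw [stdCoord_stdE, if_pos ⟨rfl, h⟩]

theorem stdCoord_stdE_of_ne {p i : ℕ} (h : p ≠ i) : stdCoord n p (stdE n i) = 0 := by
  rw [stdCoord_stdE, if_neg (by tauto)]

theorem stdCoord_sum_Icc_smul_stdE (p l u : ℕ) (f : ℕ → ℂ) :
    stdCoord n p (∑ t ∈ Finset.Icc l u, f t • stdE n t)
      = if 1 ≤ p ∧ p ≤ n ∧ l ≤ p ∧ p ≤ u then f p else 0 := by
  simp only [map_sum, map_smul, stdCoord_stdE, smul_eq_mul, mul_ite, mul_one, mul_zero, ite_and]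
  rw [Finset.sum_ite_eq]
  simp only [Finset.mem_Icc]
  split_ifs <;> tauto

theorem eq_sum_Icc_stdCoord_smul_stdE {l : ℕ} {v : Fin n → ℂ}
    (h : ∀ t, 1 ≤ t → t < l → stdCoord n t v = 0) :
    v = ∑ t ∈ Finset.Icc l n, stdCoord n t v • stdE n t := by
  refine eq_of_stdCoord_eq fun p hp hp' => ?_
  rw [stdCoord_sum_Icc_smul_stdE]
  split_ifs
  · rfl
  · exact h p hp (by omega)

theorem sum_sum_eq_single {M : Type*} [AddCommMonoid M] (f : Fin n → Fin n → M)
    (i₀ j₀ : ℕ) (hi₀ : i₀ < n) (hj₀ : j₀ < n)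
    (hf : ∀ i j : Fin n, f i j ≠ 0 → (i : ℕ) = i₀ ∧ (j : ℕ) = j₀) :
    ∑ i, ∑ j, f i j = f ⟨i₀, hi₀⟩ ⟨j₀, hj₀⟩ := by
  rw [← Finset.sum_product', Finset.univ_product_univ]
  refine Fintype.sum_eq_single ((⟨i₀, hi₀⟩, ⟨j₀, hj₀⟩) : Fin n × Fin n) fun ij hij => ?_
  by_contra h
  obtain ⟨hi, hj⟩ := hf ij.1 ij.2 h
  exact hij (Prod.ext (Fin.ext hi) (Fin.ext hj))

theorem scBr_stdE_stdE {i j : ℕ} (c : ℕ → ℕ → Fin n → ℂ) (hi : 1 ≤ i ∧ i ≤ n)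
    (hj : 1 ≤ j ∧ j ≤ n) : scBr n c (stdE n i) (stdE n j) = c i j := by
  unfold scBr
  rw [sum_sum_eq_single _ (i - 1) (j - 1) (by omega) (by omega)]
  · simp only [stdE, Nat.sub_add_cancel hi.1, Nat.sub_add_cancel hj.1, if_true, one_mul, one_smul]
  · intro k l h
    contrapose! h
    simp only [stdE]
    split_ifs <;> first | (exfalso; omega) | simp

theorem IsDer.map_structConst {c : ℕ → ℕ → Fin n → ℂ} {d : (Fin n → ℂ) →ₗ[ℂ] (Fin n → ℂ)}
    (hd : IsDer n c d) {i j : ℕ} (hi : 1 ≤ i ∧ i ≤ n) (hj : 1 ≤ j ∧ j ≤ n) :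
    d (c i j) = scBr n c (d (stdE n i)) (stdE n j) + scBr n c (stdE n i) (d (stdE n j)) := by
  rw [← scBr_stdE_stdE c hi hj, hd]

end Coordinates

section Lc
variable {n : ℕ} (α β γ : ℂ)

theorem Lc_one_of_le (hn : 5 ≤ n) {i : ℕ} (hi : 1 ≤ i ∧ i ≤ n - 3) :
    Lc n α β γ i 1 = stdE n (i + 1) := by
  rw [Lc, if_pos ⟨hi.1, hi.2, rfl⟩, if_neg (by omega), if_neg (by omega), if_neg (by omega)]
  simp

theorem Lc_sub_one_one (hn : 5 ≤ n) : Lc n α β γ (n - 1) 1 = stdE n n + α • stdE n 2 := by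
  rw [Lc, if_neg (by omega), if_pos ⟨rfl, rfl⟩, if_neg (by omega), if_neg (by omega)]
  simp

theorem Lc_self_one (hn : 5 ≤ n) : Lc n α β γ n 1 = 0 := by
  rw [Lc, if_neg (by omega), if_neg (by omega), if_neg (by omega), if_neg (by omega)]
  simp

theorem Lc_one_sub_one (hn : 5 ≤ n) : Lc n α β γ 1 (n - 1) = β • stdE n n := by
  rw [Lc, if_neg (by omega), if_neg (by omega), if_pos ⟨rfl, rfl⟩, if_neg (by omega)]
  simp

theorem Lc_sub_one_sub_one (hn : 5 ≤ n) : Lc n α β γ (n - 1) (n - 1) = γ • stdE n n := by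
  rw [Lc, if_neg (by omega), if_neg (by omega), if_neg (by omega), if_pos ⟨rfl, rfl⟩]
  simp

theorem stdCoord_scBr_Lc (hn : 5 ≤ n) (x y : Fin n → ℂ) (p : ℕ) :
    stdCoord n p (scBr n (Lc n α β γ) x y) =
      (if 3 ≤ p ∧ p ≤ n - 2 then stdCoord n (p - 1) x * stdCoord n 1 y else 0)
      + (if p = 2 then (stdCoord n 1 x + α * stdCoord n (n - 1) x) * stdCoord n 1 y else 0)
      + (if p = n then stdCoord n (n - 1) x * stdCoord n 1 y
          + β * (stdCoord n 1 x * stdCoord n (n - 1) y)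
          + γ * (stdCoord n (n - 1) x * stdCoord n (n - 1) y) else 0) := by
  by_cases hp : 1 ≤ p ∧ p ≤ n
  swap
  · rw [stdCoord_apply, dif_neg hp]
    split_ifs <;> first | ring1 | (exfalso; omega)
  simp only [scBr, Lc, map_sum, map_smul, map_add, apply_ite (stdCoord n p), map_zero,
    stdCoord_stdE, smul_eq_mul, mul_add, Finset.sum_add_distrib]
  rw [sum_sum_eq_single _ (p - 2) 0 (by omega) (by omega) ?_,
    sum_sum_eq_single _ (n - 2) 0 (by omega) (by omega) ?_,
    sum_sum_eq_single _ 0 (n - 2) (by omega) (by omega) ?_,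
    sum_sum_eq_single _ (n - 2) (n - 2) (by omega) (by omega) ?_]
  · have h1 := stdCoord_eq_apply (n := n) (p := 1) ⟨0, by omega⟩ rfl
    have hn1 := stdCoord_eq_apply (n := n) (p := n - 1) ⟨n - 2, by omega⟩ (by simp; omega)
    have hn2 : n - 2 + 1 = n - 1 := by omega
    simp only [h1, hn1, hn2, and_self, and_true, if_true, hp]
    split_ifs <;> first | ring1 | (exfalso; omega) |
      (rw [stdCoord_eq_apply ⟨p - 2, by omega⟩ (by simp; omega)]; ring1) |
      (subst_vars; simp only [Nat.sub_self]; ring1)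
  all_goals
    intro i j h
    contrapose! h
    split_ifs <;> first | ring1 | (exfalso; omega)

end Lc

section Derivation
variable {n : ℕ} {α β γ : ℂ} {d : (Fin n → ℂ) →ₗ[ℂ] (Fin n → ℂ)}

local notation "𝐚" t:max => stdCoord n t (d (stdE n 1))
local notation "𝐛" t:max => stdCoord n t (d (stdE n (n - 1)))

theorem stdCoord_d_stdE_two (hn : 5 ≤ n) (hd : IsDer n (Lc n α β γ) d) (p : ℕ) :
    stdCoord n p (d (stdE n 2)) =
      (if p = 2 then 2 * 𝐚 1 + α * 𝐚 (n - 1) else 0)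
      + (if 3 ≤ p ∧ p ≤ n - 2 then 𝐚 (p - 1) else 0)
      + (if p = n then (1 + β) * 𝐚 (n - 1) else 0) := by
  have h := hd.map_structConst (i := 1) (j := 1) (by omega) (by omega)
  rw [Lc_one_of_le α β γ hn (i := 1) (by omega)] at h
  rw [h, map_add, stdCoord_scBr_Lc α β γ hn, stdCoord_scBr_Lc α β γ hn,
    stdCoord_stdE_self (by omega), stdCoord_stdE_of_ne (show n - 1 ≠ 1 by omega)]
  simp only [stdCoord_stdE]
  split_ifs <;> first | (exfalso; omega) | ring1

theorem stdCoord_d_stdE_of_two_le (hn : 5 ≤ n) (hd : IsDer n (Lc n α β γ) d) {i : ℕ}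
    (hi : 2 ≤ i) (hi' : i ≤ n - 2) (p : ℕ) :
    stdCoord n p (d (stdE n i)) =
      (if p = i then i * 𝐚 1 + α * 𝐚 (n - 1) else 0)
      + (if i + 1 ≤ p ∧ p ≤ n - 2 then 𝐚 (p - i + 1) else 0)
      + (if i = 2 ∧ p = n then (1 + β) * 𝐚 (n - 1) else 0) := by
  induction i, hi using Nat.le_induction generalizing p with
  | base =>
    rw [stdCoord_d_stdE_two hn hd, Nat.cast_ofNat]
    split_ifs <;> first | (exfalso; omega) | ring1 | rw [show p - 2 + 1 = p - 1 by omega]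
  | succ i hi ih =>
    have ih := ih (by omega)
    have h1 : stdCoord n 1 (d (stdE n i)) = 0 := by
      rw [ih]; split_ifs <;> first | ring1 | (exfalso; omega)
    have hn1 : stdCoord n (n - 1) (d (stdE n i)) = 0 := by
      rw [ih]; split_ifs <;> first | ring1 | (exfalso; omega)
    have h := hd.map_structConst (i := i) (j := 1) (by omega) (by omega)
    rw [Lc_one_of_le α β γ hn (by omega)] at h
    rw [h, map_add, stdCoord_scBr_Lc α β γ hn, stdCoord_scBr_Lc α β γ hn, h1, hn1,
      stdCoord_stdE_self (by omega), stdCoord_stdE_of_ne (show n - 1 ≠ 1 by omega),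
      stdCoord_stdE_of_ne (show 1 ≠ i by omega), stdCoord_stdE_of_ne (show n - 1 ≠ i by omega)]
    simp only [stdCoord_stdE, Nat.cast_add, Nat.cast_one]
    split_ifs <;> first | (exfalso; omega) | ring1 |
      (simp (disch := omega) only [ih, if_pos, if_neg, Nat.sub_sub, Nat.add_comm 1 i]; ring1)

theorem stdCoord_d_stdE_self (hn : 5 ≤ n) (hd : IsDer n (Lc n α β γ) d) (p : ℕ) :
    stdCoord n p (d (stdE n n)) =
      (if 3 ≤ p ∧ p ≤ n - 2 then 𝐛 (p - 1) - α * 𝐚 (p - 1) else 0)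
      + (if p = 2 then 𝐛 1 + α * 𝐛 (n - 1) - α * 𝐚 1 - α ^ 2 * 𝐚 (n - 1) else 0)
      + (if p = n then 𝐛 (n - 1) + 𝐚 1 + γ * 𝐚 (n - 1) - α * (1 + β) * 𝐚 (n - 1) else 0) := by
  have h := hd.map_structConst (i := n - 1) (j := 1) (by omega) (by omega)
  rw [Lc_sub_one_one α β γ hn, map_add, map_smul, ← eq_sub_iff_add_eq] at h
  rw [h, map_sub, map_add, map_smul, smul_eq_mul, stdCoord_scBr_Lc α β γ hn,
    stdCoord_scBr_Lc α β γ hn, stdCoord_d_stdE_two hn hd,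
    stdCoord_stdE_self (by omega), stdCoord_stdE_self (by omega),
    stdCoord_stdE_of_ne (show n - 1 ≠ 1 by omega), stdCoord_stdE_of_ne (show 1 ≠ n - 1 by omega)]
  simp only [stdCoord_stdE]
  split_ifs <;> first | (exfalso; omega) | ring1

theorem beta_mul_stdCoord_d_stdE_self (hn : 5 ≤ n) (hd : IsDer n (Lc n α β γ) d) (p : ℕ) :
    β * stdCoord n p (d (stdE n n)) =
      (if p = 2 then 𝐛 1 else 0)
      + (if p = n then β * 𝐚 1 + γ * 𝐚 (n - 1) + β * 𝐛 (n - 1) else 0) := by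
  have h := hd.map_structConst (i := 1) (j := n - 1) (by omega) (by omega)
  rw [Lc_one_sub_one α β γ hn, map_smul] at h
  rw [← smul_eq_mul, ← map_smul, h, map_add, stdCoord_scBr_Lc α β γ hn,
    stdCoord_scBr_Lc α β γ hn, stdCoord_stdE_self (by omega), stdCoord_stdE_self (by omega),
    stdCoord_stdE_of_ne (show n - 1 ≠ 1 by omega), stdCoord_stdE_of_ne (show 1 ≠ n - 1 by omega)]
  simp only [stdCoord_stdE]
  split_ifs <;> first | (exfalso; omega) | ring1

theorem gamma_mul_stdCoord_d_stdE_self (hn : 5 ≤ n) (hd : IsDer n (Lc n α β γ) d) (p : ℕ) :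
    γ * stdCoord n p (d (stdE n n)) =
      (if p = 2 then α * 𝐛 1 else 0)
      + (if p = n then (1 + β) * 𝐛 1 + 2 * γ * 𝐛 (n - 1) else 0) := by
  have h := hd.map_structConst (i := n - 1) (j := n - 1) (by omega) (by omega)
  rw [Lc_sub_one_sub_one α β γ hn, map_smul] at h
  rw [← smul_eq_mul, ← map_smul, h, map_add, stdCoord_scBr_Lc α β γ hn,
    stdCoord_scBr_Lc α β γ hn, stdCoord_stdE_self (by omega),
    stdCoord_stdE_of_ne (show 1 ≠ n - 1 by omega)]
  simp only [stdCoord_stdE]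
  split_ifs <;> first | (exfalso; omega) | ring1

theorem stdCoord_d_stdE_self_eq_zero (hn : 5 ≤ n) (hd : IsDer n (Lc n α β γ) d) {q : ℕ}
    (hq : 1 ≤ q) (hq' : q ≤ n - 3) : stdCoord n q (d (stdE n n)) = 0 := by
  have hn1 : stdCoord n (n - 1) (d (stdE n n)) = 0 := by
    rw [stdCoord_d_stdE_self hn hd]
    split_ifs <;> first | (exfalso; omega) | ring1
  have h := congrArg (stdCoord n (q + 1))
    (hd.map_structConst (i := n) (j := 1) (by omega) (by omega))
  rw [Lc_self_one α β γ hn, map_zero, map_zero, map_add, stdCoord_scBr_Lc α β γ hn,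
    stdCoord_scBr_Lc α β γ hn, hn1, stdCoord_stdE_self (by omega),
    stdCoord_stdE_of_ne (show n - 1 ≠ n by omega), stdCoord_stdE_of_ne (show 1 ≠ n by omega)] at h
  simp only [stdCoord_stdE, Nat.add_sub_cancel] at h
  split_ifs at h <;> first | (exfalso; omega) | linear_combination -h |
    (obtain rfl : q = 1 := by omega
     linear_combination -h)

theorem stdCoord_one_d_stdE_sub_one_eq_zero (hn : 5 ≤ n) (hd : IsDer n (Lc n α β γ) d) :
    𝐛 1 = 0 := by
  have h := beta_mul_stdCoord_d_stdE_self hn hd 2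
  rw [stdCoord_d_stdE_self_eq_zero hn hd (by omega) (by omega), if_pos rfl,
    if_neg (by omega)] at h
  linear_combination -h

theorem stdCoord_d_stdE_sub_one_of_le (hn : 5 ≤ n) (hd : IsDer n (Lc n α β γ) d) {i : ℕ}
    (hi : 2 ≤ i) (hi' : i ≤ n - 4) : 𝐛 i = α * 𝐚 i := by
  have h := stdCoord_d_stdE_self hn hd (i + 1)
  rw [stdCoord_d_stdE_self_eq_zero hn hd (by omega) (by omega), if_pos (by omega),
    if_neg (by omega), if_neg (by omega), Nat.add_sub_cancel] at h
  linear_combination -h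

theorem alpha_mul_stdCoord_sub_one_d_stdE_sub_one (hn : 5 ≤ n) (hd : IsDer n (Lc n α β γ) d) :
    α * 𝐛 (n - 1) = α * 𝐚 1 + α ^ 2 * 𝐚 (n - 1) := by
  have h := stdCoord_d_stdE_self hn hd 2
  rw [stdCoord_d_stdE_self_eq_zero hn hd (by omega) (by omega), if_neg (by omega), if_pos rfl,
    if_neg (by omega), stdCoord_one_d_stdE_sub_one_eq_zero hn hd] at h
  linear_combination -h

theorem stdCoord_sub_two_d_stdE_self (hn : 5 ≤ n) (hd : IsDer n (Lc n α β γ) d) :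
    stdCoord n (n - 2) (d (stdE n n)) = 𝐛 (n - 3) - α * 𝐚 (n - 3) := by
  rw [stdCoord_d_stdE_self hn hd, if_pos (by omega), if_neg (by omega), if_neg (by omega),
    show n - 2 - 1 = n - 3 by omega]
  ring

theorem stdCoord_self_d_stdE_self (hn : 5 ≤ n) (hd : IsDer n (Lc n α β γ) d) :
    stdCoord n n (d (stdE n n)) =
      𝐛 (n - 1) + 𝐚 1 + γ * 𝐚 (n - 1) - α * (1 + β) * 𝐚 (n - 1) := by
  rw [stdCoord_d_stdE_self hn hd, if_neg (by omega), if_neg (by omega), if_pos rfl]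
  ring

theorem beta_mul_stdCoord_sub_three_eq_zero (hn : 5 ≤ n) (hd : IsDer n (Lc n α β γ) d) :
    β * (𝐛 (n - 3) - α * 𝐚 (n - 3)) = 0 := by
  have h := beta_mul_stdCoord_d_stdE_self hn hd (n - 2)
  rwa [stdCoord_sub_two_d_stdE_self hn hd, if_neg (by omega), if_neg (by omega), add_zero] at h

theorem gamma_mul_stdCoord_sub_three_eq_zero (hn : 5 ≤ n) (hd : IsDer n (Lc n α β γ) d) :
    γ * (𝐛 (n - 3) - α * 𝐚 (n - 3)) = 0 := by
  have h := gamma_mul_stdCoord_d_stdE_self hn hd (n - 2)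
  rwa [stdCoord_sub_two_d_stdE_self hn hd, if_neg (by omega), if_neg (by omega), add_zero] at h

theorem gamma_mul_stdCoord_sub_one_d_stdE_sub_one (hn : 5 ≤ n) (hd : IsDer n (Lc n α β γ) d) :
    γ * 𝐛 (n - 1) = γ * (𝐚 1 + γ * 𝐚 (n - 1) - α * (1 + β) * 𝐚 (n - 1)) := by
  have h := gamma_mul_stdCoord_d_stdE_self hn hd n
  rw [stdCoord_self_d_stdE_self hn hd, if_neg (by omega), if_pos rfl,
    stdCoord_one_d_stdE_sub_one_eq_zero hn hd] at h
  linear_combination -h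

theorem gamma_mul_stdCoord_sub_one_d_stdE_one (hn : 5 ≤ n) (hd : IsDer n (Lc n α β γ) d) :
    γ * 𝐚 (n - 1) = β * 𝐚 (n - 1) * (γ - α * (1 + β)) := by
  have h := beta_mul_stdCoord_d_stdE_self hn hd n
  rw [stdCoord_self_d_stdE_self hn hd, if_neg (by omega), if_pos rfl] at h
  linear_combination -h

theorem d_stdE_two (hn : 5 ≤ n) (hd : IsDer n (Lc n α β γ) d) :
    d (stdE n 2) = (2 * 𝐚 1 + α * 𝐚 (n - 1)) • stdE n 2
      + (∑ t ∈ Finset.Icc 3 (n - 2), 𝐚 (t - 1) • stdE n t)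
      + (𝐚 (n - 1) + β * 𝐚 (n - 1)) • stdE n n := by
  refine eq_of_stdCoord_eq fun p hp hp' => ?_
  rw [stdCoord_d_stdE_two hn hd, map_add, map_add, map_smul, map_smul,
    stdCoord_sum_Icc_smul_stdE, stdCoord_stdE, stdCoord_stdE]
  split_ifs <;> first | (exfalso; omega) | ring1

theorem d_stdE_of_three_le (hn : 5 ≤ n) (hd : IsDer n (Lc n α β γ) d) {i : ℕ} (hi : 3 ≤ i)
    (hi' : i ≤ n - 2) :
    d (stdE n i) = ((i : ℂ) * 𝐚 1 + α * 𝐚 (n - 1)) • stdE n i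
      + ∑ t ∈ Finset.Icc (i + 1) (n - 2), 𝐚 (t - i + 1) • stdE n t := by
  refine eq_of_stdCoord_eq fun p hp hp' => ?_
  rw [stdCoord_d_stdE_of_two_le hn hd (by omega) hi', map_add, map_smul,
    stdCoord_sum_Icc_smul_stdE, stdCoord_stdE]
  split_ifs <;> first | (exfalso; omega) | ring1

theorem d_stdE_self (hn : 5 ≤ n) (hd : IsDer n (Lc n α β γ) d) :
    d (stdE n n) = (𝐛 (n - 3) - α * 𝐚 (n - 3)) • stdE n (n - 2)
      + (𝐛 (n - 1) + 𝐚 1 + γ * 𝐚 (n - 1) - α * (1 + β) * 𝐚 (n - 1)) • stdE n n := by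
  refine eq_of_stdCoord_eq fun p hp hp' => ?_
  rw [map_add, map_smul, map_smul, stdCoord_stdE, stdCoord_stdE, smul_eq_mul, smul_eq_mul]
  obtain hp3 | rfl | rfl | rfl : p ≤ n - 3 ∨ p = n - 2 ∨ p = n - 1 ∨ p = n := by omega
  · rw [stdCoord_d_stdE_self_eq_zero hn hd hp hp3, if_neg (by omega), if_neg (by omega)]
    ring
  · rw [stdCoord_sub_two_d_stdE_self hn hd, if_pos (by omega), if_neg (by omega)]
    ring
  · rw [stdCoord_d_stdE_self hn hd]
    split_ifs <;> first | (exfalso; omega) | ring1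
  · rw [stdCoord_self_d_stdE_self hn hd, if_neg (by omega), if_pos (by omega)]
    ring

end Derivation

theorem derivations_of_L (n : ℕ) (hn : 5 ≤ n) (α β γ : ℂ)
    (d : (Fin n → ℂ) →ₗ[ℂ] (Fin n → ℂ)) (hd : IsDer n (Lc n α β γ) d) :
    ∃ a b : ℕ → ℂ,
      d (stdE n 1) = ∑ t ∈ Finset.Icc 1 n, a t • stdE n t ∧
      d (stdE n 2) = (2 * a 1 + α * a (n - 1)) • stdE n 2
          + (∑ t ∈ Finset.Icc 3 (n - 2), a (t - 1) • stdE n t)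
          + (a (n - 1) + β * a (n - 1)) • stdE n n ∧
      (∀ i : ℕ, 3 ≤ i → i ≤ n - 2 →
        d (stdE n i) = ((i : ℂ) * a 1 + α * a (n - 1)) • stdE n i
          + ∑ t ∈ Finset.Icc (i + 1) (n - 2), a (t - i + 1) • stdE n t) ∧
      d (stdE n (n - 1)) = ∑ t ∈ Finset.Icc 2 n, b t • stdE n t ∧
      d (stdE n n) = (b (n - 3) - α * a (n - 3)) • stdE n (n - 2)
          + (b (n - 1) + a 1 + γ * a (n - 1) - α * (1 + β) * a (n - 1)) • stdE n n ∧
      (∀ i : ℕ, 2 ≤ i → i ≤ n - 4 → b i = α * a i) ∧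
      β * (b (n - 3) - α * a (n - 3)) = 0 ∧
      γ * (b (n - 3) - α * a (n - 3)) = 0 ∧
      α * b (n - 1) = α * a 1 + α ^ 2 * a (n - 1) ∧
      γ * b (n - 1) = γ * (a 1 + γ * a (n - 1) - α * (1 + β) * a (n - 1)) ∧
      γ * a (n - 1) = β * a (n - 1) * (γ - α * (1 + β)) := by
  have hb₁ : ∀ t, 1 ≤ t → t < 2 → stdCoord n t (d (stdE n (n - 1))) = 0 := fun t ht ht' => by
    obtain rfl : t = 1 := by omega
    exact stdCoord_one_d_stdE_sub_one_eq_zero hn hd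
  exact ⟨fun t => stdCoord n t (d (stdE n 1)), fun t => stdCoord n t (d (stdE n (n - 1))),
    eq_sum_Icc_stdCoord_smul_stdE (by omega), d_stdE_two hn hd,
    fun i hi hi' => d_stdE_of_three_le hn hd hi hi', eq_sum_Icc_stdCoord_smul_stdE hb₁,
    d_stdE_self hn hd, fun i hi hi' => stdCoord_d_stdE_sub_one_of_le hn hd hi hi',
    beta_mul_stdCoord_sub_three_eq_zero hn hd, gamma_mul_stdCoord_sub_three_eq_zero hn hd,
    alpha_mul_stdCoord_sub_one_d_stdE_sub_one hn hd,
    gamma_mul_stdCoord_sub_one_d_stdE_sub_one hn hd, gamma_mul_stdCoord_sub_one_d_stdE_one hn hd⟩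
end
end

section
/- Let n ≥ 5 be an integer and let (α,β,γ) be one of (0,0,1), (1,1,0), (1,1,1), (1,2,4), or (1,0,γ) with γ ≠ 0. Then there is no solvable complex Leibniz algebra R of dimension n+1 whose nilradical is isomorphic to the n-dimensional algebra 𝓛(α,β,γ). -/
open scoped BigOperators

noncomputable section

/-- A complex Leibniz algebra structure on the module `R`. -/
structure LeibnizAlgStr (R : Type) [AddCommGroup R] [Module ℂ R] where
  br : R →ₗ[ℂ] R →ₗ[ℂ] R
  leibniz : ∀ x y z : R, br x (br y z) = br (br x y) z - br (br x z) y

section GeneralDefs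

variable {R : Type} [AddCommGroup R] [Module ℂ R]

/-- The span of all brackets `[a, b]` with `a ∈ A`, `b ∈ C`. -/
def bracketSpan (B : LeibnizAlgStr R) (A C : Submodule ℂ R) : Submodule ℂ R :=
  Submodule.span ℂ {z | ∃ a ∈ A, ∃ c ∈ C, z = B.br a c}

/-- Derived series: `derivedSer B k = L^[k+1]`. -/
def derivedSer (B : LeibnizAlgStr R) : ℕ → Submodule ℂ R
  | 0 => ⊤
  | k + 1 => bracketSpan B (derivedSer B k) (derivedSer B k)

/-- Solvability: some term of the derived series vanishes. -/
def IsSolvableAlg (B : LeibnizAlgStr R) : Prop := ∃ m, derivedSer B m = ⊥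

/-- Lower central series of a subspace `I` (as an algebra): `idealLCS B I k = I^{k+1}`. -/
def idealLCS (B : LeibnizAlgStr R) (I : Submodule ℂ R) : ℕ → Submodule ℂ R
  | 0 => I
  | k + 1 => bracketSpan B (idealLCS B I k) I

/-- `I` is a two-sided ideal. -/
def IsIdeal (B : LeibnizAlgStr R) (I : Submodule ℂ R) : Prop :=
  ∀ x ∈ I, ∀ y : R, B.br x y ∈ I ∧ B.br y x ∈ I

/-- `I` is a nilpotent two-sided ideal. -/
def IsNilpotentIdeal (B : LeibnizAlgStr R) (I : Submodule ℂ R) : Prop :=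
  IsIdeal B I ∧ ∃ m, idealLCS B I m = ⊥

/-- `I` is the nilradical: the largest nilpotent two-sided ideal. -/
def IsNilradical (B : LeibnizAlgStr R) (I : Submodule ℂ R) : Prop :=
  IsNilpotentIdeal B I ∧ ∀ J : Submodule ℂ R, IsNilpotentIdeal B J → J ≤ I

/-- The nilradical of `B` is isomorphic (as a Leibniz algebra) to the `n`-dimensional
algebra with structure constants `c`. -/
def NilradIsoModel (B : LeibnizAlgStr R) (n : ℕ) (c : ℕ → ℕ → Fin n → ℂ) : Prop :=
  ∃ I : Submodule ℂ R, IsNilradical B I ∧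
    ∃ g : (Fin n → ℂ) →ₗ[ℂ] R, Function.Injective g ∧ LinearMap.range g = I ∧
      ∀ u v : Fin n → ℂ, g (scBr n c u v) = B.br (g u) (g v)

end GeneralDefs

/-! Let `I` be the nilradical, of codimension one in `R`, and `x ∉ I`. If `[x,x] ∉ I`, the iterated
squares of `x` never vanish, so solvability forces `[R,R] ⊆ I`. On the model `𝓛(α,β,γ)`,
right and left multiplication by `x` become a derivation `D` and a map `L` tied to it by the
Leibniz identity; for the listed parameters the structure constants force `D` to send the
generators `e_1, e_{n-1}` into `[I,I]`. Then `[·,x]` raises the lower central series of `I` by one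
step, whence `R^{k+1} ⊆ I^k`: `R` is nilpotent, contradicting the maximality of the nilradical. -/

lemma Submodule.exists_notMem_sup_span_singleton_eq_top {K V : Type*} [Field K]
    [AddCommGroup V] [Module K V] [FiniteDimensional K V] {I : Submodule K V}
    (hI : Module.finrank K I + 1 = Module.finrank K V) : ∃ x ∉ I, I ⊔ K ∙ x = ⊤ := by
  have hI_ne : I ≠ ⊤ := by
    rintro rfl
    rw [finrank_top] at hI
    omega
  obtain ⟨x, -, hx⟩ := SetLike.exists_of_lt (lt_top_iff_ne_top.mpr hI_ne)
  refine ⟨x, hx, Submodule.eq_top_of_finrank_eq (le_antisymm (Submodule.finrank_le _) ?_)⟩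
  have := Submodule.finrank_lt_finrank_of_lt (Submodule.lt_sup_iff_notMem.mpr hx)
  omega

lemma LinearMap.exists_comp_eq_comp_of_injective {K V W : Type*} [Field K] [AddCommGroup V]
    [Module K V] [AddCommGroup W] [Module K W] (g : V →ₗ[K] W) (hg : Function.Injective g)
    (f : W →ₗ[K] W) (hf : ∀ v, f (g v) ∈ LinearMap.range g) : ∃ F : V →ₗ[K] V, g ∘ₗ F = f ∘ₗ g := by
  obtain ⟨h, hh⟩ := g.exists_leftInverse_of_injective (LinearMap.ker_eq_bot.mpr hg)
  refine ⟨h ∘ₗ f ∘ₗ g, LinearMap.ext fun v => ?_⟩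
  obtain ⟨u, hu⟩ := hf v
  rw [LinearMap.comp_apply, LinearMap.comp_apply, LinearMap.comp_apply, ← hu,
    ← LinearMap.comp_apply h g, hh, LinearMap.id_apply]

section Leibniz

variable {R : Type} [AddCommGroup R] [Module ℂ R] (B : LeibnizAlgStr R)

lemma LeibnizAlgStr.br_br_right (u v x : R) :
    B.br (B.br u v) x = B.br (B.br u x) v + B.br u (B.br v x) := by
  rw [B.leibniz u v x]
  abel

lemma bracketSpan_le {A C T : Submodule ℂ R} (h : ∀ a ∈ A, ∀ c ∈ C, B.br a c ∈ T) :
    bracketSpan B A C ≤ T :=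
  Submodule.span_le.mpr fun _ ⟨a, ha, c, hc, hz⟩ => hz ▸ h a ha c hc

lemma br_mem_bracketSpan {A C : Submodule ℂ R} {a c : R} (ha : a ∈ A) (hc : c ∈ C) :
    B.br a c ∈ bracketSpan B A C :=
  Submodule.subset_span ⟨a, ha, c, hc, rfl⟩

variable {B}

lemma br_mem_bracketSpan_of_mem {I : Submodule ℂ R} (hI : IsIdeal B I) {z : R}
    (hz : z ∈ bracketSpan B I I) (y : R) : B.br z y ∈ bracketSpan B I I := by
  refine bracketSpan_le (T := (bracketSpan B I I).comap (B.br.flip y)) B (fun a ha c hc => ?_) hz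
  rw [Submodule.mem_comap, LinearMap.flip_apply, B.br_br_right]
  exact add_mem (br_mem_bracketSpan B (hI a ha y).1 hc) (br_mem_bracketSpan B ha (hI c hc y).1)

/-- The Leibniz identity `[a,[b,c]] = [[a,b],c] - [[a,c],b]` moves a bracket from the right
factor into the left one. -/
lemma br_mem_idealLCS_add_two {I : Submodule ℂ R} {k : ℕ} {a z : R} (ha : a ∈ idealLCS B I k)
    (hz : z ∈ bracketSpan B I I) : B.br a z ∈ idealLCS B I (k + 2) := by
  refine bracketSpan_le (T := (idealLCS B I (k + 2)).comap (B.br a)) B (fun b hb c hc => ?_) hz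
  rw [Submodule.mem_comap, B.leibniz]
  exact sub_mem (br_mem_bracketSpan B (br_mem_bracketSpan B ha hb) hc)
    (br_mem_bracketSpan B (br_mem_bracketSpan B ha hc) hb)

lemma derivation_mem_idealLCS_succ {I : Submodule ℂ R} (D : R →ₗ[ℂ] R)
    (hD : ∀ u v, D (B.br u v) = B.br (D u) v + B.br u (D v))
    (hDI : ∀ y ∈ I, D y ∈ bracketSpan B I I) :
    ∀ k, ∀ y ∈ idealLCS B I k, D y ∈ idealLCS B I (k + 1)
  | 0 => hDI
  | k + 1 => by
    refine bracketSpan_le (T := (idealLCS B I (k + 2)).comap D) B (fun a ha c hc => ?_)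
    rw [Submodule.mem_comap, hD]
    exact add_mem (br_mem_bracketSpan B (derivation_mem_idealLCS_succ D hD hDI k a ha) hc)
      (br_mem_idealLCS_add_two ha (hDI c hc))

lemma exists_sub_smul_mem_of_sup_eq_top {I : Submodule ℂ R} {x : R} (hx : I ⊔ ℂ ∙ x = ⊤)
    (r : R) : ∃ c : ℂ, r - c • x ∈ I := by
  obtain ⟨y, hy, z, hz, rfl⟩ := Submodule.mem_sup.mp (hx ▸ Submodule.mem_top : r ∈ I ⊔ ℂ ∙ x)
  obtain ⟨c, rfl⟩ := Submodule.mem_span_singleton.mp hz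
  exact ⟨c, by rwa [add_sub_cancel_right]⟩

lemma br_sub_smul_br_mem {I : Submodule ℂ R} (hI : IsIdeal B I) {x u v : R} {e f : ℂ}
    (hu : u - e • x ∈ I) (hv : v - f • x ∈ I) : B.br u v - (e * f) • B.br x x ∈ I := by
  have hsplit : B.br u v - (e * f) • B.br x x = B.br (u - e • x) v + e • B.br x (v - f • x) := by
    simp only [map_sub, map_smul, LinearMap.sub_apply, LinearMap.smul_apply, smul_sub, smul_smul]
    abel
  rw [hsplit]
  exact add_mem (hI _ hu v).1 (I.smul_mem e (hI _ hv x).2)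

lemma iterate_br_self_mem_derivedSer (x : R) :
    ∀ k, (fun v => B.br v v)^[k] x ∈ derivedSer B k
  | 0 => Submodule.mem_top
  | k + 1 => by
    rw [Function.iterate_succ_apply']
    exact br_mem_bracketSpan B (iterate_br_self_mem_derivedSer x k)
      (iterate_br_self_mem_derivedSer x k)

lemma exists_iterate_br_self_sub_smul_mem {I : Submodule ℂ R} (hI : IsIdeal B I) {x : R} {c : ℂ}
    (hc₀ : c ≠ 0) (hc : B.br x x - c • x ∈ I) :
    ∀ k, ∃ e : ℂ, e ≠ 0 ∧ (fun v => B.br v v)^[k] x - e • x ∈ I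
  | 0 => ⟨1, one_ne_zero, by rw [Function.iterate_zero_apply, one_smul, sub_self]; exact zero_mem _⟩
  | k + 1 => by
    obtain ⟨e, he, hek⟩ := exists_iterate_br_self_sub_smul_mem hI hc₀ hc k
    refine ⟨e * e * c, mul_ne_zero (mul_ne_zero he he) hc₀, ?_⟩
    have h := add_mem (br_sub_smul_br_mem hI hek hek) (I.smul_mem (e * e) hc)
    rwa [smul_sub, smul_smul, sub_add_sub_cancel,
      ← Function.iterate_succ_apply' (fun v => B.br v v)] at h

lemma br_self_mem_of_isSolvableAlg {I : Submodule ℂ R} (hI : IsIdeal B I) {x : R}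
    (hx : I ⊔ ℂ ∙ x = ⊤) (hsolv : IsSolvableAlg B) : B.br x x ∈ I := by
  by_contra hxx
  obtain ⟨c, hc⟩ := exists_sub_smul_mem_of_sup_eq_top hx (B.br x x)
  have hc₀ : c ≠ 0 := by
    rintro rfl
    rw [zero_smul, sub_zero] at hc
    exact hxx hc
  obtain ⟨m, hm⟩ := hsolv
  obtain ⟨e, he, hem⟩ := exists_iterate_br_self_sub_smul_mem hI hc₀ hc m
  have hzero := iterate_br_self_mem_derivedSer (B := B) x m
  rw [hm, Submodule.mem_bot] at hzero
  rw [hzero, zero_sub, neg_mem_iff] at hem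
  have hx_mem : x ∈ I := by simpa [he] using I.smul_mem e⁻¹ hem
  exact hxx (hI x hx_mem x).1

lemma br_mem_of_isSolvableAlg {I : Submodule ℂ R} (hI : IsIdeal B I) {x : R}
    (hx : I ⊔ ℂ ∙ x = ⊤) (hsolv : IsSolvableAlg B) (a b : R) : B.br a b ∈ I := by
  obtain ⟨e, he⟩ := exists_sub_smul_mem_of_sup_eq_top hx a
  obtain ⟨f, hf⟩ := exists_sub_smul_mem_of_sup_eq_top hx b
  simpa using add_mem (br_sub_smul_br_mem hI he hf)
    (I.smul_mem (e * f) (br_self_mem_of_isSolvableAlg hI hx hsolv))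

/-- Modulo `I^{k+1}`, bracketing with `r = y + c x` (`y ∈ I`) acts on `I^k` as `c • [·, x]`, and
the derivation `[·, x]` maps `I^k` into `I^{k+1}`. -/
lemma idealLCS_top_succ_le {I : Submodule ℂ R} {x : R} (hx : I ⊔ ℂ ∙ x = ⊤)
    (hbr : ∀ a b, B.br a b ∈ I) (hxI : ∀ y ∈ I, B.br y x ∈ bracketSpan B I I) :
    ∀ k, idealLCS B ⊤ (k + 1) ≤ idealLCS B I k
  | 0 => bracketSpan_le B fun a _ b _ => hbr a b
  | k + 1 => by
    refine bracketSpan_le B fun a ha r _ => ?_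
    have ha' := idealLCS_top_succ_le hx hbr hxI k ha
    obtain ⟨c, hc⟩ := exists_sub_smul_mem_of_sup_eq_top hx r
    have hd := derivation_mem_idealLCS_succ (B.br.flip x)
      (fun u v => B.br_br_right u v x) hxI k a ha'
    rw [LinearMap.flip_apply] at hd
    rw [← sub_add_cancel r (c • x), map_add, map_smul]
    exact add_mem (br_mem_bracketSpan B ha' hc) ((idealLCS B I (k + 1)).smul_mem c hd)

end Leibniz

section ModelAlgebra

variable {n : ℕ} {α β γ : ℂ}

local notation "𝔏" => scBr n (Lc n α β γ)

lemma stdE_succ (i : Fin n) : stdE n (i + 1) = Pi.single i 1 := by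
  funext j
  simp only [stdE, Pi.single_apply, Nat.add_right_cancel_iff, Fin.val_inj]

lemma Lc_apply (i k : ℕ) (j : Fin n) :
    Lc n α β γ i k j =
      (if (1 ≤ i ∧ i ≤ n - 3 ∧ k = 1) ∧ (j : ℕ) + 1 = i + 1 then 1 else 0)
      + ((if (i = n - 1 ∧ k = 1) ∧ (j : ℕ) + 1 = n then 1 else 0)
        + (if (i = n - 1 ∧ k = 1) ∧ (j : ℕ) + 1 = 2 then α else 0))
      + (if (i = 1 ∧ k = n - 1) ∧ (j : ℕ) + 1 = n then β else 0)
      + (if (i = n - 1 ∧ k = n - 1) ∧ (j : ℕ) + 1 = n then γ else 0) := by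
  simp only [Lc, stdE, Pi.add_apply, ite_apply, Pi.smul_apply, Pi.zero_apply, smul_eq_mul,
    mul_ite, mul_one, mul_zero, ite_and]
  split_ifs <;> simp

lemma Lc_apply_of_ne (i k : ℕ) (j : Fin n) (hk₁ : k ≠ 1) (hk₂ : k ≠ n - 1) :
    Lc n α β γ i k j = 0 := by
  rw [Lc_apply]
  split_ifs <;> first | (exfalso; omega) | norm_num

lemma sum_mul_ite_of_iff (u : Fin n → ℂ) (c : ℂ) (P : Fin n → Prop) [DecidablePred P] (k : ℕ)
    (hk : k < n) (hP : ∀ m : Fin n, P m ↔ (m : ℕ) = k) :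
    ∑ i : Fin n, u i * (if P i then c else 0) = u ⟨k, hk⟩ * c := by
  rw [Finset.sum_eq_single ⟨k, hk⟩ (fun i _ hi => by rw [if_neg fun h => hi (Fin.ext ((hP i).1 h)),
    mul_zero]) (fun h => absurd (Finset.mem_univ _) h), if_pos ((hP _).2 rfl)]

lemma sum_mul_ite_of_forall_not (u : Fin n → ℂ) (c : ℂ) (P : Fin n → Prop) [DecidablePred P]
    (hP : ∀ m, ¬ P m) : ∑ i : Fin n, u i * (if P i then c else 0) = 0 :=
  Finset.sum_eq_zero fun i _ => by rw [if_neg (hP i), mul_zero]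

lemma sum_mul_Lc_one_apply (hn : 5 ≤ n) (u : Fin n → ℂ) (j : Fin n) :
    ∑ i : Fin n, u i * Lc n α β γ ((i : ℕ) + 1) 1 j =
      (if 2 ≤ (j : ℕ) + 1 ∧ (j : ℕ) + 1 ≤ n - 2 then u ⟨(j : ℕ) - 1, by omega⟩ else 0)
      + ((if (j : ℕ) + 1 = n then u ⟨n - 2, by omega⟩ else 0)
        + (if (j : ℕ) + 1 = 2 then α * u ⟨n - 2, by omega⟩ else 0)) := by
  simp only [Lc_apply, mul_add, Finset.sum_add_distrib, and_true]
  rw [sum_mul_ite_of_forall_not u β _ (fun m => by omega),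
    sum_mul_ite_of_forall_not u γ _ (fun m => by omega), add_zero, add_zero]
  congr 1
  · split_ifs with hj
    · rw [sum_mul_ite_of_iff u 1 _ ((j : ℕ) - 1) (by omega) (fun m => by omega), mul_one]
    · exact sum_mul_ite_of_forall_not u 1 _ (fun m => by omega)
  congr 1
  · split_ifs with hj
    · rw [sum_mul_ite_of_iff u 1 _ (n - 2) (by omega) (fun m => by omega), mul_one]
    · exact sum_mul_ite_of_forall_not u 1 _ (fun m => by omega)
  · split_ifs with hj
    · rw [sum_mul_ite_of_iff u α _ (n - 2) (by omega) (fun m => by omega), mul_comm]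
    · exact sum_mul_ite_of_forall_not u α _ (fun m => by omega)

lemma sum_mul_Lc_sub_one_apply (hn : 5 ≤ n) (u : Fin n → ℂ) (j : Fin n) :
    ∑ i : Fin n, u i * Lc n α β γ ((i : ℕ) + 1) (n - 1) j =
      if (j : ℕ) + 1 = n then β * u ⟨0, by omega⟩ + γ * u ⟨n - 2, by omega⟩ else 0 := by
  simp only [Lc_apply, mul_add, Finset.sum_add_distrib, and_true]
  rw [sum_mul_ite_of_forall_not u 1 _ (fun m => by omega),
    sum_mul_ite_of_forall_not u 1 _ (fun m => by omega),
    sum_mul_ite_of_forall_not u α _ (fun m => by omega), zero_add, add_zero, zero_add]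
  split_ifs with hj
  · rw [sum_mul_ite_of_iff u β _ 0 (by omega) (fun m => by omega),
      sum_mul_ite_of_iff u γ _ (n - 2) (by omega) (fun m => by omega), mul_comm, mul_comm γ]
  · rw [sum_mul_ite_of_forall_not u β _ (fun m => by omega),
      sum_mul_ite_of_forall_not u γ _ (fun m => by omega), add_zero]

/-- Coordinates of `Fin n → ℂ` are 0-based: `w ⟨0, _⟩` and `w ⟨n - 2, _⟩` are the coefficients of
`e_1 = stdE n 1` and `e_{n-1} = stdE n (n - 1)`. -/
lemma scBr_Lc_apply (hn : 5 ≤ n) (u v : Fin n → ℂ) (j : Fin n) :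
    𝔏 u v j =
      v ⟨0, by omega⟩ *
        ((if 2 ≤ (j : ℕ) + 1 ∧ (j : ℕ) + 1 ≤ n - 2 then u ⟨(j : ℕ) - 1, by omega⟩ else 0)
          + ((if (j : ℕ) + 1 = n then u ⟨n - 2, by omega⟩ else 0)
            + (if (j : ℕ) + 1 = 2 then α * u ⟨n - 2, by omega⟩ else 0)))
      + v ⟨n - 2, by omega⟩ *
          (if (j : ℕ) + 1 = n then β * u ⟨0, by omega⟩ + γ * u ⟨n - 2, by omega⟩ else 0) := by
  have hne : (⟨0, by omega⟩ : Fin n) ≠ ⟨n - 2, by omega⟩ := fun h => by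
    have := congrArg Fin.val h; simp only at this; omega
  simp only [scBr, Finset.sum_apply, Pi.smul_apply, smul_eq_mul]
  rw [Finset.sum_comm]
  simp only [mul_comm (u _) (v _), mul_assoc, ← Finset.mul_sum]
  rw [← Finset.sum_subset (Finset.subset_univ {⟨0, by omega⟩, ⟨n - 2, by omega⟩})
    fun k _ hk => by
      simp only [Finset.mem_insert, Finset.mem_singleton, Fin.ext_iff, not_or] at hk
      rw [Finset.sum_eq_zero fun i _ => by
        rw [Lc_apply_of_ne _ _ _ (by omega) (by omega), mul_zero], mul_zero],
    Finset.sum_pair hne, show n - 2 + 1 = n - 1 by omega, sum_mul_Lc_one_apply hn,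
    sum_mul_Lc_sub_one_apply hn]

lemma scBr_Lc_stdE_one_apply (hn : 5 ≤ n) (w : Fin n → ℂ) (j : Fin n) :
    𝔏 w (stdE n 1) j =
      (if 2 ≤ (j : ℕ) + 1 ∧ (j : ℕ) + 1 ≤ n - 2 then w ⟨(j : ℕ) - 1, by omega⟩ else 0)
      + ((if (j : ℕ) + 1 = n then w ⟨n - 2, by omega⟩ else 0)
        + (if (j : ℕ) + 1 = 2 then α * w ⟨n - 2, by omega⟩ else 0)) := by
  rw [scBr_Lc_apply hn]
  simp only [stdE]
  split_ifs <;> first | (exfalso; omega) | ring1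

lemma scBr_Lc_stdE_sub_one_apply (hn : 5 ≤ n) (w : Fin n → ℂ) (j : Fin n) :
    𝔏 w (stdE n (n - 1)) j =
      if (j : ℕ) + 1 = n then β * w ⟨0, by omega⟩ + γ * w ⟨n - 2, by omega⟩ else 0 := by
  rw [scBr_Lc_apply hn]
  simp only [stdE]
  split_ifs <;> first | (exfalso; omega) | ring1

lemma scBr_Lc_stdE_one_left_apply (hn : 5 ≤ n) (w : Fin n → ℂ) (j : Fin n) :
    𝔏 (stdE n 1) w j =
      w ⟨0, by omega⟩ * (if (j : ℕ) + 1 = 2 then 1 else 0)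
      + β * w ⟨n - 2, by omega⟩ * (if (j : ℕ) + 1 = n then 1 else 0) := by
  rw [scBr_Lc_apply hn]
  simp only [stdE]
  split_ifs <;> first | (exfalso; omega) | ring1

lemma scBr_Lc_stdE_sub_one_left_apply (hn : 5 ≤ n) (w : Fin n → ℂ) (j : Fin n) :
    𝔏 (stdE n (n - 1)) w j =
      w ⟨0, by omega⟩ *
        ((if (j : ℕ) + 1 = n then 1 else 0) + α * (if (j : ℕ) + 1 = 2 then 1 else 0))
      + γ * w ⟨n - 2, by omega⟩ * (if (j : ℕ) + 1 = n then 1 else 0) := by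
  rw [scBr_Lc_apply hn]
  simp only [stdE]
  split_ifs <;> first | (exfalso; omega) | ring1

lemma scBr_Lc_stdE_left_apply (hn : 5 ≤ n) {k : ℕ} (hk₂ : 2 ≤ k) (hk₃ : k ≤ n - 3)
    (w : Fin n → ℂ) (j : Fin n) :
    𝔏 (stdE n k) w j = w ⟨0, by omega⟩ * (if (j : ℕ) + 1 = k + 1 then 1 else 0) := by
  rw [scBr_Lc_apply hn]
  simp only [stdE]
  split_ifs <;> first | (exfalso; omega) | ring1

lemma scBr_Lc_stdE_stdE_one (hn : 5 ≤ n) {k : ℕ} (hk₁ : 1 ≤ k) (hk₃ : k ≤ n - 3) :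
    𝔏 (stdE n k) (stdE n 1) = stdE n (k + 1) := by
  funext j
  rw [scBr_Lc_stdE_one_apply hn]
  simp only [stdE]
  split_ifs <;> first | (exfalso; omega) | ring1

lemma scBr_Lc_stdE_sub_one_stdE_one (hn : 5 ≤ n) :
    𝔏 (stdE n (n - 1)) (stdE n 1) = stdE n n + α • stdE n 2 := by
  funext j
  rw [scBr_Lc_stdE_one_apply hn]
  simp only [stdE, Pi.add_apply, Pi.smul_apply, smul_eq_mul]
  split_ifs <;> first | (exfalso; omega) | ring1

lemma scBr_Lc_stdE_one_stdE_sub_one (hn : 5 ≤ n) :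
    𝔏 (stdE n 1) (stdE n (n - 1)) = β • stdE n n := by
  funext j
  rw [scBr_Lc_stdE_sub_one_apply hn]
  simp only [stdE, Pi.smul_apply, smul_eq_mul]
  split_ifs <;> first | (exfalso; omega) | ring1

lemma scBr_Lc_stdE_sub_one_stdE_sub_one (hn : 5 ≤ n) :
    𝔏 (stdE n (n - 1)) (stdE n (n - 1)) = γ • stdE n n := by
  funext j
  rw [scBr_Lc_stdE_sub_one_apply hn]
  simp only [stdE, Pi.smul_apply, smul_eq_mul]
  split_ifs <;> first | (exfalso; omega) | ring1

lemma scBr_Lc_stdE_two_stdE_sub_one (hn : 5 ≤ n) :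
    𝔏 (stdE n 2) (stdE n (n - 1)) = 0 := by
  funext j
  rw [scBr_Lc_stdE_sub_one_apply hn]
  simp only [stdE, Pi.zero_apply]
  split_ifs <;> first | (exfalso; omega) | ring1

lemma derivation_Lc_stdE_two_apply (hn : 5 ≤ n) (D : (Fin n → ℂ) →ₗ[ℂ] (Fin n → ℂ))
    (hD : ∀ u v, D (𝔏 u v) = 𝔏 (D u) v + 𝔏 u (D v)) :
    D (stdE n 2) ⟨0, by omega⟩ = 0 ∧ D (stdE n 2) ⟨n - 2, by omega⟩ = 0 ∧
      D (stdE n 2) ⟨n - 1, by omega⟩ = (1 + β) * D (stdE n 1) ⟨n - 2, by omega⟩ := by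
  have h := hD (stdE n 1) (stdE n 1)
  rw [scBr_Lc_stdE_stdE_one hn le_rfl (by omega)] at h
  refine ⟨?_, ?_, ?_⟩
  all_goals
    rw [h, Pi.add_apply, scBr_Lc_stdE_one_apply hn, scBr_Lc_stdE_one_left_apply hn]
    simp only
    split_ifs <;> first | (exfalso; omega) | ring

lemma derivation_Lc_stdE_sub_one_apply_zero (hn : 5 ≤ n) (D : (Fin n → ℂ) →ₗ[ℂ] (Fin n → ℂ))
    (hD : ∀ u v, D (𝔏 u v) = 𝔏 (D u) v + 𝔏 u (D v)) :
    D (stdE n (n - 1)) ⟨0, by omega⟩ = 0 := by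
  obtain ⟨h₀, hₘ, -⟩ := derivation_Lc_stdE_two_apply hn D hD
  have h := congrFun (hD (stdE n 2) (stdE n (n - 1))) ⟨2, by omega⟩
  rw [scBr_Lc_stdE_two_stdE_sub_one hn, map_zero, Pi.zero_apply, Pi.add_apply,
    scBr_Lc_stdE_sub_one_apply hn, scBr_Lc_stdE_left_apply hn le_rfl (by omega), h₀, hₘ] at h
  simp only at h
  split_ifs at h <;> first | (exfalso; omega) | linear_combination -h

/-- The three relations come from applying `D` to `[e_{n-1},e_1] = e_n + α e_2`,
`[e_1,e_{n-1}] = β e_n` and `[e_{n-1},e_{n-1}] = γ e_n`, read off at the coordinate of `e_n`;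
`μ` is that coordinate of `D e_n`. -/
lemma derivation_Lc_relations (hn : 5 ≤ n) (D : (Fin n → ℂ) →ₗ[ℂ] (Fin n → ℂ))
    (hD : ∀ u v, D (𝔏 u v) = 𝔏 (D u) v + 𝔏 u (D v)) :
    ∃ μ : ℂ,
      μ + α * (1 + β) * D (stdE n 1) ⟨n - 2, by omega⟩ = D (stdE n (n - 1)) ⟨n - 2, by omega⟩
        + D (stdE n 1) ⟨0, by omega⟩ + γ * D (stdE n 1) ⟨n - 2, by omega⟩ ∧
      β * μ = β * D (stdE n 1) ⟨0, by omega⟩ + γ * D (stdE n 1) ⟨n - 2, by omega⟩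
        + β * D (stdE n (n - 1)) ⟨n - 2, by omega⟩ ∧
      γ * μ = 2 * γ * D (stdE n (n - 1)) ⟨n - 2, by omega⟩ := by
  obtain ⟨-, -, h₂⟩ := derivation_Lc_stdE_two_apply hn D hD
  have hb₀ := derivation_Lc_stdE_sub_one_apply_zero hn D hD
  refine ⟨D (stdE n n) ⟨n - 1, by omega⟩, ?_, ?_, ?_⟩
  · have h := congrFun (hD (stdE n (n - 1)) (stdE n 1)) ⟨n - 1, by omega⟩
    rw [scBr_Lc_stdE_sub_one_stdE_one hn, map_add, map_smul, Pi.add_apply, Pi.add_apply,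
      Pi.smul_apply, smul_eq_mul, h₂, scBr_Lc_stdE_one_apply hn,
      scBr_Lc_stdE_sub_one_left_apply hn] at h
    simp only at h
    split_ifs at h <;> first | (exfalso; omega) | linear_combination h
  · have h := congrFun (hD (stdE n 1) (stdE n (n - 1))) ⟨n - 1, by omega⟩
    rw [scBr_Lc_stdE_one_stdE_sub_one hn, map_smul, Pi.smul_apply, smul_eq_mul, Pi.add_apply,
      scBr_Lc_stdE_sub_one_apply hn, scBr_Lc_stdE_one_left_apply hn] at h
    simp only at h
    split_ifs at h <;> first | (exfalso; omega) | linear_combination h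
  · have h := congrFun (hD (stdE n (n - 1)) (stdE n (n - 1))) ⟨n - 1, by omega⟩
    rw [scBr_Lc_stdE_sub_one_stdE_sub_one hn, map_smul, Pi.smul_apply, smul_eq_mul, Pi.add_apply,
      scBr_Lc_stdE_sub_one_apply hn, scBr_Lc_stdE_sub_one_left_apply hn, hb₀] at h
    simp only at h
    split_ifs at h <;> first | (exfalso; omega) | linear_combination h

lemma apply_eq_zero_of_forall_scBr_Lc_eq_zero (hn : 5 ≤ n) (hβγ : β ≠ 0 ∨ γ ≠ 0)
    {w : Fin n → ℂ} (hw : ∀ u, 𝔏 u w = 0) : w ⟨0, by omega⟩ = 0 ∧ w ⟨n - 2, by omega⟩ = 0 := by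
  have h₁ := congrFun (hw (stdE n 1)) ⟨1, by omega⟩
  have h₂ := congrFun (hw (stdE n 1)) ⟨n - 1, by omega⟩
  have h₃ := congrFun (hw (stdE n (n - 1))) ⟨n - 1, by omega⟩
  rw [scBr_Lc_stdE_one_left_apply hn, Pi.zero_apply] at h₁ h₂
  rw [scBr_Lc_stdE_sub_one_left_apply hn, Pi.zero_apply] at h₃
  simp only [↓reduceIte] at h₁ h₂ h₃
  split_ifs at h₁ h₂ h₃ <;> try (exfalso; omega)
  have hw₀ : w ⟨0, by omega⟩ = 0 := by linear_combination h₁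
  refine ⟨hw₀, ?_⟩
  rcases hβγ with hβ | hγ
  · exact (mul_eq_zero.mp (by linear_combination h₂)).resolve_left hβ
  · exact (mul_eq_zero.mp (by linear_combination h₃ - (1 + α * 0) * hw₀)).resolve_left hγ

/-- `L` plays the role of left multiplication by the adjoined element; the Leibniz identity kills
`L e_n`, and what is left are the coordinates of `L e_n = [L e_{n-1}, e_1] - [L e_1, e_{n-1}]`. -/
lemma Lc_left_mul_relations (hn : 5 ≤ n) (hβγ : β + 1 ≠ 0 ∨ γ ≠ 0)
    (L : (Fin n → ℂ) →ₗ[ℂ] (Fin n → ℂ)) (hL : ∀ u v, L (𝔏 u v) = 𝔏 (L u) v - 𝔏 (L v) u) :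
    L (stdE n (n - 1)) ⟨0, by omega⟩ + α * L (stdE n (n - 1)) ⟨n - 2, by omega⟩ = 0 ∧
      L (stdE n (n - 1)) ⟨n - 2, by omega⟩ =
        β * L (stdE n 1) ⟨0, by omega⟩ + γ * L (stdE n 1) ⟨n - 2, by omega⟩ := by
  have hL₂ : L (stdE n 2) = 0 := by
    simpa [scBr_Lc_stdE_stdE_one hn le_rfl (by omega)] using hL (stdE n 1) (stdE n 1)
  have hLn : L (stdE n n) =
      𝔏 (L (stdE n (n - 1))) (stdE n 1) - 𝔏 (L (stdE n 1)) (stdE n (n - 1)) := by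
    simpa [scBr_Lc_stdE_sub_one_stdE_one hn, hL₂] using hL (stdE n (n - 1)) (stdE n 1)
  have hγ : γ • L (stdE n n) = 0 := by
    simpa [scBr_Lc_stdE_sub_one_stdE_sub_one hn] using hL (stdE n (n - 1)) (stdE n (n - 1))
  have hβ : (β + 1) • L (stdE n n) = 0 := by
    have h := hL (stdE n 1) (stdE n (n - 1))
    rw [scBr_Lc_stdE_one_stdE_sub_one hn, map_smul, ← neg_sub, ← hLn] at h
    rw [add_smul, one_smul, h, neg_add_cancel]
  have hLn₀ : L (stdE n n) = 0 := by
    rcases hβγ with h | h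
    · exact (smul_eq_zero.mp hβ).resolve_left h
    · exact (smul_eq_zero.mp hγ).resolve_left h
  rw [hLn₀, eq_comm, sub_eq_zero] at hLn
  have h₁ := congrFun hLn ⟨1, by omega⟩
  have h₂ := congrFun hLn ⟨n - 1, by omega⟩
  rw [scBr_Lc_stdE_one_apply hn, scBr_Lc_stdE_sub_one_apply hn] at h₁ h₂
  simp only [↓reduceIte] at h₁ h₂
  split_ifs at h₁ h₂ <;> try (exfalso; omega)
  exact ⟨by linear_combination h₁, by linear_combination h₂⟩

/-- `D` and `L` stand for right and left multiplication by an element `x` adjoined to `𝓛(α,β,γ)`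
(so `hLD` is `[u, [x,v] + [v,x]] = 0`); the conclusion says that `D` maps the generators
`e_1, e_{n-1}` into the derived algebra. -/
theorem derivation_Lc_generators_apply_eq_zero (hn : 5 ≤ n) (hα : α ≠ 0 ∨ β = 0)
    (hc : γ - β * γ + α * β * (1 + β) ≠ 0) (D L : (Fin n → ℂ) →ₗ[ℂ] (Fin n → ℂ))
    (hD : ∀ u v, D (𝔏 u v) = 𝔏 (D u) v + 𝔏 u (D v))
    (hL : ∀ u v, L (𝔏 u v) = 𝔏 (L u) v - 𝔏 (L v) u)
    (hLD : ∀ u v, 𝔏 u (L v + D v) = 0) :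
    D (stdE n 1) ⟨0, by omega⟩ = 0 ∧ D (stdE n 1) ⟨n - 2, by omega⟩ = 0 ∧
      D (stdE n (n - 1)) ⟨0, by omega⟩ = 0 ∧ D (stdE n (n - 1)) ⟨n - 2, by omega⟩ = 0 := by
  have hβγ : β ≠ 0 ∨ γ ≠ 0 := by
    by_contra! h
    exact hc (by rw [h.1, h.2]; ring)
  have hβγ' : β + 1 ≠ 0 ∨ γ ≠ 0 := by
    by_contra! h
    exact hc (by rw [eq_neg_of_add_eq_zero_left h.1, h.2]; ring)
  obtain ⟨μ, hμ, hβμ, hγμ⟩ := derivation_Lc_relations hn D hD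
  have hb₀ := derivation_Lc_stdE_sub_one_apply_zero hn D hD
  obtain ⟨hp₀, hpₘ⟩ := apply_eq_zero_of_forall_scBr_Lc_eq_zero hn hβγ (hLD · (stdE n 1))
  obtain ⟨hq₀, hqₘ⟩ := apply_eq_zero_of_forall_scBr_Lc_eq_zero hn hβγ (hLD · (stdE n (n - 1)))
  obtain ⟨hq, hqp⟩ := Lc_left_mul_relations hn hβγ' L hL
  simp only [Pi.add_apply] at hp₀ hpₘ hq₀ hqₘ
  set a₀ := D (stdE n 1) ⟨0, by omega⟩
  set aₘ := D (stdE n 1) ⟨n - 2, by omega⟩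
  set bₘ := D (stdE n (n - 1)) ⟨n - 2, by omega⟩
  have haₘ : aₘ = 0 := by
    refine (mul_eq_zero.mp ?_).resolve_right hc
    linear_combination β * hμ - hβμ
  have hbₘ_eq : bₘ = β * a₀ := by
    linear_combination hqₘ - hqp - β * hp₀ - γ * hpₘ + γ * haₘ
  have hbₘ : bₘ = 0 := by
    rcases hα with hα | hβ
    · refine (mul_eq_zero.mp ?_).resolve_left hα
      linear_combination α * hqₘ - hq + hq₀ - hb₀
    · rw [hbₘ_eq, hβ, zero_mul]
  have ha₀ : a₀ = 0 := by
    rcases hβγ with hβ | hγ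
    · exact (mul_eq_zero.mp (by linear_combination -hbₘ_eq + hbₘ)).resolve_left hβ
    · refine (mul_eq_zero.mp ?_).resolve_left hγ
      linear_combination hγμ - γ * hμ + γ * hbₘ + γ * (α * (1 + β) - γ) * haₘ
  exact ⟨ha₀, haₘ, hb₀, hbₘ⟩

lemma exists_eq_add_smul_stdE_add_smul_stdE (hn : 5 ≤ n) (w : Fin n → ℂ) :
    ∃ (w' : Fin n → ℂ) (a b : ℂ), w' ⟨0, by omega⟩ = 0 ∧ w' ⟨n - 2, by omega⟩ = 0 ∧
      w = w' + a • stdE n 1 + b • stdE n (n - 1) := by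
  refine ⟨w - w ⟨0, by omega⟩ • stdE n 1 - w ⟨n - 2, by omega⟩ • stdE n (n - 1), _, _, ?_, ?_,
    by abel⟩
  all_goals
    simp only [Pi.sub_apply, Pi.smul_apply, stdE, smul_eq_mul]
    split_ifs <;> first | (exfalso; omega) | ring

end ModelAlgebra

section Transport

variable {n : ℕ} {α β γ : ℂ} {R : Type} [AddCommGroup R] [Module ℂ R] {B : LeibnizAlgStr R}

local notation "𝔏" => scBr n (Lc n α β γ)

/-- Every basis vector other than `e_1, e_{n-1}` is a bracket: `e_{k+1} = [e_k, e_1]` and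
`e_n = [e_{n-1}, e_1] - α [e_1, e_1]`. -/
lemma map_mem_bracketSpan_of_apply_eq_zero (hn : 5 ≤ n) {I : Submodule ℂ R}
    (g : (Fin n → ℂ) →ₗ[ℂ] R) (hgI : ∀ u, g u ∈ I) (hg : ∀ u v, g (𝔏 u v) = B.br (g u) (g v))
    {w : Fin n → ℂ} (h₀ : w ⟨0, by omega⟩ = 0) (hₘ : w ⟨n - 2, by omega⟩ = 0) :
    g w ∈ bracketSpan B I I := by
  have hbr : ∀ u v, g (𝔏 u v) ∈ bracketSpan B I I :=
    fun u v => hg u v ▸ br_mem_bracketSpan B (hgI u) (hgI v)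
  rw [pi_eq_sum_univ' w, map_sum]
  refine sum_mem fun i _ => ?_
  rw [map_smul, ← stdE_succ]
  by_cases hi : (i : ℕ) = 0 ∨ (i : ℕ) = n - 2
  · have hwi : w i = 0 := by
      rcases hi with hi | hi
      · rwa [show i = ⟨0, by omega⟩ from Fin.ext hi]
      · rwa [show i = ⟨n - 2, by omega⟩ from Fin.ext hi]
    rw [hwi, zero_smul]
    exact zero_mem _
  refine Submodule.smul_mem _ _ ?_
  by_cases hN : (i : ℕ) + 1 = n
  · have he : stdE n n = 𝔏 (stdE n (n - 1)) (stdE n 1) - α • 𝔏 (stdE n 1) (stdE n 1) := by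
      rw [scBr_Lc_stdE_sub_one_stdE_one hn, scBr_Lc_stdE_stdE_one hn le_rfl (by omega),
        add_sub_cancel_right]
    rw [hN, he, map_sub, map_smul]
    exact sub_mem (hbr _ _) (Submodule.smul_mem _ _ (hbr _ _))
  · rw [← scBr_Lc_stdE_stdE_one hn (k := i) (by omega) (by omega)]
    exact hbr _ _

theorem br_mem_bracketSpan_of_isIdeal_of_iso (hn : 5 ≤ n) (hα : α ≠ 0 ∨ β = 0)
    (hc : γ - β * γ + α * β * (1 + β) ≠ 0) {I : Submodule ℂ R} (hI : IsIdeal B I)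
    (g : (Fin n → ℂ) →ₗ[ℂ] R) (hg_inj : Function.Injective g) (hg_range : LinearMap.range g = I)
    (hg : ∀ u v, g (𝔏 u v) = B.br (g u) (g v)) (x : R) :
    ∀ y ∈ I, B.br y x ∈ bracketSpan B I I := by
  have hgI : ∀ u, g u ∈ I := fun u => hg_range ▸ LinearMap.mem_range_self g u
  obtain ⟨D, hgD⟩ := g.exists_comp_eq_comp_of_injective hg_inj (B.br.flip x)
    fun u => hg_range ▸ (hI _ (hgI u) x).1
  obtain ⟨L, hgL⟩ := g.exists_comp_eq_comp_of_injective hg_inj (B.br x)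
    fun u => hg_range ▸ (hI _ (hgI u) x).2
  replace hgD : ∀ u, g (D u) = B.br (g u) x := LinearMap.congr_fun hgD
  replace hgL : ∀ u, g (L u) = B.br x (g u) := LinearMap.congr_fun hgL
  obtain ⟨ha₀, haₘ, hb₀, hbₘ⟩ := derivation_Lc_generators_apply_eq_zero hn hα hc D L
    (fun u v => hg_inj <| by
      rw [map_add, hg, hg, hgD, hgD, hgD, hg]
      exact B.br_br_right _ _ _)
    (fun u v => hg_inj <| by
      rw [map_sub, hg, hg, hgL, hgL, hgL, hg]
      exact B.leibniz _ _ _)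
    (fun u v => hg_inj <| by
      rw [map_zero, hg, map_add, hgL, hgD, map_add, B.leibniz, B.br_br_right (g u) (g v) x]
      abel)
  have hM := fun w => map_mem_bracketSpan_of_apply_eq_zero hn g hgI hg (w := w)
  intro y hy
  rw [← hg_range] at hy
  obtain ⟨w, rfl⟩ := hy
  obtain ⟨w', a, b, hw'₀, hw'ₘ, rfl⟩ := exists_eq_add_smul_stdE_add_smul_stdE hn w
  rw [map_add, map_add, map_smul, map_smul, map_add, map_add, map_smul, map_smul,
    LinearMap.add_apply, LinearMap.add_apply, LinearMap.smul_apply, LinearMap.smul_apply,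
    ← hgD (stdE n 1), ← hgD (stdE n (n - 1))]
  exact add_mem (add_mem (br_mem_bracketSpan_of_mem hI (hM _ hw'₀ hw'ₘ) x)
    (Submodule.smul_mem _ _ (hM _ ha₀ haₘ))) (Submodule.smul_mem _ _ (hM _ hb₀ hbₘ))

end Transport

lemma nondegenerate_of_triple {α β γ : ℂ}
    (htriple : (α = 0 ∧ β = 0 ∧ γ = 1) ∨ (α = 1 ∧ β = 1 ∧ γ = 0) ∨
      (α = 1 ∧ β = 1 ∧ γ = 1) ∨ (α = 1 ∧ β = 2 ∧ γ = 4) ∨ (α = 1 ∧ β = 0 ∧ γ ≠ 0)) :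
    (α ≠ 0 ∨ β = 0) ∧ γ - β * γ + α * β * (1 + β) ≠ 0 := by
  rcases htriple with ⟨rfl, rfl, rfl⟩ | ⟨rfl, rfl, rfl⟩ | ⟨rfl, rfl, rfl⟩ | ⟨rfl, rfl, rfl⟩ |
    ⟨rfl, rfl, hγ⟩ <;> norm_num
  exact hγ

theorem no_codim_one_solvable_extension_L (n : ℕ) (hn : 5 ≤ n) (α β γ : ℂ)
    (htriple : (α = 0 ∧ β = 0 ∧ γ = 1) ∨ (α = 1 ∧ β = 1 ∧ γ = 0) ∨
      (α = 1 ∧ β = 1 ∧ γ = 1) ∨ (α = 1 ∧ β = 2 ∧ γ = 4) ∨ (α = 1 ∧ β = 0 ∧ γ ≠ 0))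
    (R : Type) [AddCommGroup R] [Module ℂ R] [FiniteDimensional ℂ R]
    (B : LeibnizAlgStr R) (hsolv : IsSolvableAlg B)
    (hdim : Module.finrank ℂ R = n + 1)
    (hnil : NilradIsoModel B n (Lc n α β γ)) : False := by
  obtain ⟨I, ⟨⟨hI, m, hm⟩, hmax⟩, g, hg_inj, hg_range, hg⟩ := hnil
  have hrank : Module.finrank ℂ I + 1 = Module.finrank ℂ R := by
    rw [← hg_range, LinearMap.finrank_range_of_inj hg_inj, Module.finrank_fin_fun, hdim]
  obtain ⟨x, hxI, hx⟩ := Submodule.exists_notMem_sup_span_singleton_eq_top hrank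
  obtain ⟨hα, hc⟩ := nondegenerate_of_triple htriple
  have hbr := br_mem_of_isSolvableAlg hI hx hsolv
  have hxI' := br_mem_bracketSpan_of_isIdeal_of_iso hn hα hc hI g hg_inj hg_range hg x
  have htop : IsNilpotentIdeal B ⊤ :=
    ⟨fun _ _ _ => ⟨trivial, trivial⟩,
      m + 1, eq_bot_iff.mpr (hm ▸ idealLCS_top_succ_le hx hbr hxI' m)⟩
  exact hxI (hmax ⊤ htop trivial)
end
end
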